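/- Let α > 1, β > 2, γ = α + β, and 0 ≤ ε < γ²/2. Define u_ε(x) = sin^α(x) cos^β(x) ₂F₁( γ/2 + √(ε/2), γ/2 − √(ε/2); α+½; sin²x ) and v_ε(x) = cos^{2β−1}(x) ₂F₁( γ/2 + √(ε/2), γ/2 − √(ε/2); α+½; sin²x ) for x ∈ (0, π/2), and assume u_ε > 0 on (0, π/2). Define V₁(x) = α(α+1)/(2 sin²x) + (β−2)(β−1)/(2 cos²x) − (log v_ε)''(x) and κ = (log u_ε)'. Then for every integer n ≥ 0, the function φ_n = (−ψ_{0,n}' + κ ψ_{0,n})/√2 satisfies −½φ_n'' + V₁φ_n = E_n φ_n on (0, π/2), where ψ_{0,n} is the n-th Pöschl–Teller eigenfunction and E_n = ½(2n+γ)². -/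

import Mathlib

open Filter Real Topology

/-- The Pochhammer symbol `(a)_m = a(a+1)⋯(a+m-1)`. -/
noncomputable def poch (a : ℝ) (m : ℕ) : ℝ := ∏ j ∈ Finset.range m, (a + j)

/-- The Gauss hypergeometric series `₂F₁(a,b;c;s) = Σ_{k≥0} (a)_k(b)_k/((c)_k k!) s^k`. -/
noncomputable def hyp2F1 (a b c s : ℝ) : ℝ :=
  ∑' k : ℕ, poch a k * poch b k / (poch c k * (Nat.factorial k : ℝ)) * s ^ k

/-- The normalized Pöschl–Teller eigenfunctions `ψ_{0,n}`, with `γ = α + β`. -/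
noncomputable def PTeigenfun (α β : ℝ) (n : ℕ) (x : ℝ) : ℝ :=
  Real.sqrt (2 * (2 * (n : ℝ) + (α + β)) * Real.Gamma ((n : ℝ) + (α + β)) * poch (α + 1 / 2) n /
      ((Nat.factorial n : ℝ) * Real.Gamma (α + 1 / 2) * Real.Gamma (β + 1 / 2) *
        poch (β + 1 / 2) n)) *
    Real.sin x ^ α * Real.cos x ^ β *
    ∑ m ∈ Finset.range (n + 1),
      poch (-(n : ℝ)) m * poch ((n : ℝ) + (α + β)) m /
        (poch (α + 1 / 2) m * (Nat.factorial m : ℝ)) * Real.sin x ^ (2 * m)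

/-! Both `u_ε` and `ψ_{0,n}` are of the form `sin^α x cos^β x F(sin² x)` with
`F = ₂F₁(a, b; α + ½; ·)` and `a + b = γ`; the hypergeometric equation for `F` becomes
`-½ w'' + V₀ w = ((a - b)² / 2) w`. If `u ≠ 0` and `ψ` solve this equation at energies `ε`
and `E`, then `κ = u'/u` satisfies the Riccati equation `κ' = 2 (V₀ - ε) - κ²`, and with it a
direct computation shows that `φ = (-ψ' + κ ψ)/√2` solves the equation for the potential
`V₀ - κ'` at the same energy `E`. Finally `v_ε = u_ε cos^{β-1} / sin^α`, which turns `V₁` into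
`V₀ - κ'`. -/

open FormalMultilinearSeries Set
open scoped ENNReal

def derivCoeff (c : ℕ → ℝ) (k : ℕ) : ℝ := (k + 1) * c (k + 1)

lemma radius_le_radius_derivCoeff (c : ℕ → ℝ) :
    (ofScalars ℝ c).radius ≤ (ofScalars ℝ (derivCoeff c)).radius := by
  refine ENNReal.le_of_forall_nnreal_lt fun r hr => ?_
  rcases eq_or_ne r 0 with rfl | hr0
  · simp
  obtain ⟨a, ha, C, hCpos, hC⟩ := (ofScalars ℝ c).norm_mul_pow_le_mul_pow_of_lt_radius hr
  obtain ⟨M, hM⟩ := (tendsto_self_mul_const_pow_of_lt_one ha.1.le ha.2).bddAbove_range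
  refine (ofScalars ℝ (derivCoeff c)).le_radius_of_bound (C * M / r) fun k => ?_
  have hCk := hC (k + 1)
  have hMk : ((k + 1 : ℕ) : ℝ) * a ^ (k + 1) ≤ M := hM ⟨k + 1, rfl⟩
  simp only [ofScalars_norm, derivCoeff, norm_mul, Real.norm_eq_abs] at hCk ⊢
  rw [le_div_iff₀ (by positivity)]
  calc |(k : ℝ) + 1| * |c (k + 1)| * (r : ℝ) ^ k * r
      = ((k + 1 : ℕ) : ℝ) * (|c (k + 1)| * (r : ℝ) ^ (k + 1)) := by
        rw [abs_of_pos (by positivity)]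
        push_cast
        ring
    _ ≤ ((k + 1 : ℕ) : ℝ) * (C * a ^ (k + 1)) := by gcongr
    _ = C * (((k + 1 : ℕ) : ℝ) * a ^ (k + 1)) := by ring
    _ ≤ C * M := by gcongr

lemma hasSum_ofScalarsSum {c : ℕ → ℝ} {s : ℝ}
    (hs : (‖s‖₊ : ℝ≥0∞) < (ofScalars ℝ c).radius) :
    HasSum (fun k => c k * s ^ k) (ofScalarsSum c s) := by
  rw [ofScalars_sum_eq]
  simp only [smul_eq_mul]
  refine (((ofScalars ℝ c).summable_norm_mul_pow hs).of_norm_bounded fun k => ?_).hasSum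
  simp

lemma hasDerivAt_ofScalarsSum {c : ℕ → ℝ} {s : ℝ}
    (hs : (‖s‖₊ : ℝ≥0∞) < (ofScalars ℝ c).radius) :
    HasDerivAt (ofScalarsSum c) (ofScalarsSum (derivCoeff c) s) s := by
  obtain ⟨r, hsr, hr⟩ := ENNReal.lt_iff_exists_nnreal_btwn.mp hs
  have hs_ball : s ∈ Metric.ball (0 : ℝ) r := by
    simpa using (show |s| < r by exact_mod_cast hsr)
  have hbound : ∀ (k : ℕ), ∀ y ∈ Metric.ball (0 : ℝ) r,
      ‖c k * (k * y ^ (k - 1))‖ ≤ k * ‖c k‖ * (r : ℝ) ^ (k - 1) := by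
    intro k y hy
    rw [mem_ball_zero_iff] at hy
    rw [norm_mul, norm_mul, norm_pow, Real.norm_natCast]
    calc ‖c k‖ * (k * ‖y‖ ^ (k - 1)) ≤ ‖c k‖ * (k * (r : ℝ) ^ (k - 1)) := by gcongr
      _ = _ := by ring
  have hsum : Summable fun k : ℕ => k * ‖c k‖ * (r : ℝ) ^ (k - 1) := by
    refine (summable_nat_add_iff 1).mp <| ((ofScalars ℝ (derivCoeff c)).summable_norm_mul_pow
      (hr.trans_le (radius_le_radius_derivCoeff c))).congr fun k => ?_
    simp only [ofScalars_norm, derivCoeff, norm_mul, Real.norm_eq_abs, Nat.add_sub_cancel]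
    rw [abs_of_pos (by positivity)]
    push_cast
    ring
  have hD := hasDerivAt_tsum_of_isPreconnected hsum Metric.isOpen_ball
    (convex_ball (0 : ℝ) r).isPreconnected
    (fun k y _ => (hasDerivAt_pow k y).const_mul (c k)) hbound hs_ball
    (hasSum_ofScalarsSum hs).summable hs_ball
  simp only [ofScalarsSum_eq_tsum, smul_eq_mul]
  refine hD.congr_deriv ?_
  rw [(hsum.of_norm_bounded (hbound · s hs_ball)).tsum_eq_zero_add]
  simp [derivCoeff, mul_comm, mul_left_comm]

lemma HasSum.mul_pow_of_shift {d : ℕ → ℝ} {s A : ℝ}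
    (h : HasSum (fun k => d (k + 1) * s ^ k) A) (h0 : d 0 = 0) :
    HasSum (fun k => d k * s ^ k) (s * A) := by
  refine (hasSum_nat_add_iff' 1).mp ?_
  simpa [h0, pow_succ, mul_comm, mul_left_comm, mul_assoc] using h.mul_left s

lemma ofScalarsSum_hypergeometric_ode {q : ℕ → ℝ} {a b c s : ℝ}
    (hrec : ∀ k : ℕ, (k + 1) * (c + k) * q (k + 1) = (a + k) * (b + k) * q k)
    (hs : (‖s‖₊ : ℝ≥0∞) < (ofScalars ℝ q).radius) :
    s * (1 - s) * ofScalarsSum (derivCoeff (derivCoeff q)) s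
      + (c - (a + b + 1) * s) * ofScalarsSum (derivCoeff q) s - a * b * ofScalarsSum q s = 0 := by
  have hs' := hs.trans_le (radius_le_radius_derivCoeff q)
  have hF0 := hasSum_ofScalarsSum hs
  have hF1 := hasSum_ofScalarsSum hs'
  have hF2 := hasSum_ofScalarsSum (hs'.trans_le (radius_le_radius_derivCoeff _))
  have hsF1 : HasSum (fun k : ℕ => k * q k * s ^ k) (s * ofScalarsSum (derivCoeff q) s) :=
    HasSum.mul_pow_of_shift (by simpa [derivCoeff] using hF1) (by simp)
  have hsF2 : HasSum (fun k : ℕ => k * derivCoeff q k * s ^ k)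
      (s * ofScalarsSum (derivCoeff (derivCoeff q)) s) :=
    HasSum.mul_pow_of_shift (by simpa [derivCoeff, mul_comm, mul_left_comm, mul_assoc] using hF2)
      (by simp)
  have hs2F2 : HasSum (fun k : ℕ => k * (k - 1) * q k * s ^ k)
      (s * (s * ofScalarsSum (derivCoeff (derivCoeff q)) s)) :=
    HasSum.mul_pow_of_shift (by simpa [derivCoeff, mul_comm, mul_left_comm, mul_assoc] using hsF2)
      (by simp)
  have H := (((hsF2.sub hs2F2).add (hF1.mul_left c)).sub (hsF1.mul_left (a + b + 1))).sub
    (hF0.mul_left (a * b))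
  have hzero := H.unique (hasSum_zero.congr_fun fun k => by
    unfold derivCoeff
    linear_combination s ^ k * hrec k)
  linear_combination hzero

lemma poch_eq_ascPochhammer_eval (a : ℝ) (k : ℕ) : poch a k = (ascPochhammer ℝ k).eval a := by
  induction k with
  | zero => simp [poch]
  | succ k ih => rw [poch, Finset.prod_range_succ, ← poch, ih, ascPochhammer_succ_eval]

lemma hyp2F1_eq_ordinaryHypergeometric (a b c : ℝ) : hyp2F1 a b c = ₂F₁ a b c := by
  ext s
  rw [ordinaryHypergeometric_eq_tsum]
  refine tsum_congr fun k => ?_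
  simp only [poch_eq_ascPochhammer_eval, smul_eq_mul]
  ring

lemma hyp2F1_neg_nat (n : ℕ) (b c s : ℝ) :
    hyp2F1 (-n) b c s = ∑ m ∈ Finset.range (n + 1),
      poch (-n) m * poch b m / (poch c m * m.factorial) * s ^ m := by
  refine tsum_eq_sum fun m hm => ?_
  have hnm : n < m := by simpa using hm
  have : poch (-n) m = 0 := Finset.prod_eq_zero (Finset.mem_range.mpr hnm) (by ring)
  simp [this]

lemma ordinaryHypergeometricCoefficient_recurrence {𝕂 : Type*} [Field 𝕂] [CharZero 𝕂]
    {a b c : 𝕂} (hc : ∀ k : ℕ, (k : 𝕂) ≠ -c) (k : ℕ) :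
    (k + 1) * (c + k) * ordinaryHypergeometricCoefficient a b c (k + 1)
      = (a + k) * (b + k) * ordinaryHypergeometricCoefficient a b c k := by
  have hck : c + k ≠ 0 := fun h => hc k (by linear_combination h)
  have hpoch : (ascPochhammer 𝕂 k).eval c ≠ 0 := by
    rw [Ne, ascPochhammer_eval_eq_zero_iff]
    rintro ⟨j, -, hj⟩
    exact hc j hj
  have hfac : (k.factorial : 𝕂) ≠ 0 := by exact_mod_cast k.factorial_ne_zero
  simp only [ordinaryHypergeometricCoefficient, ascPochhammer_succ_eval, Nat.factorial_succ]
  push_cast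
  field_simp

lemma one_le_radius_ordinaryHypergeometricSeries {a b c : ℝ}
    (hc : ∀ k : ℕ, (k : ℝ) ≠ -c) :
    1 ≤ (ordinaryHypergeometricSeries ℝ a b c).radius := by
  by_cases hab : ∃ k : ℕ, (k : ℝ) = -a ∨ (k : ℝ) = -b
  · obtain ⟨k, hk | hk⟩ := hab
    · rw [show a = -(k : ℝ) by linarith, ordinaryHypergeometric_radius_top_of_neg_nat₁]
      exact le_top
    · rw [show b = -(k : ℝ) by linarith, ordinaryHypergeometric_radius_top_of_neg_nat₂]
      exact le_top
  · push Not at hab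
    rw [ordinaryHypergeometricSeries_radius_eq_one _ _ _ _
      fun k => ⟨(hab k).1, (hab k).2, hc k⟩]

/-- `-½ w'' + V w = E w` on `s`, written as `w'' = 2 (V - E) w` with a named derivative `w'`. -/
def SolvesSchrodingerOn (V : ℝ → ℝ) (E : ℝ) (w : ℝ → ℝ) (s : Set ℝ) : Prop :=
  ∃ w' : ℝ → ℝ, ∀ x ∈ s, HasDerivAt w (w' x) x ∧ HasDerivAt w' (2 * (V x - E) * w x) x

namespace SolvesSchrodingerOn

variable {V w : ℝ → ℝ} {E : ℝ} {s : Set ℝ}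

lemma differentiableAt (h : SolvesSchrodingerOn V E w s) {x : ℝ} (hx : x ∈ s) :
    DifferentiableAt ℝ w x := by
  obtain ⟨w', hw⟩ := h
  exact (hw x hx).1.differentiableAt

lemma const_mul (h : SolvesSchrodingerOn V E w s) (a : ℝ) :
    SolvesSchrodingerOn V E (fun x => a * w x) s := by
  obtain ⟨w', hw⟩ := h
  refine ⟨fun x => a * w' x, fun x hx => ⟨(hw x hx).1.const_mul a, ?_⟩⟩
  simpa only [mul_left_comm] using (hw x hx).2.const_mul a

lemma schrodinger (h : SolvesSchrodingerOn V E w s) (hs : IsOpen s) {x : ℝ} (hx : x ∈ s) :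
    -(1 / 2) * deriv (deriv w) x + V x * w x = E * w x := by
  obtain ⟨w', hw⟩ := h
  have hderiv : deriv w =ᶠ[𝓝 x] w' :=
    eventuallyEq_of_mem (hs.mem_nhds hx) fun y hy => (hw y hy).1.deriv
  rw [hderiv.deriv_eq, (hw x hx).2.deriv]
  ring

lemma hasDerivAt_deriv_log (h : SolvesSchrodingerOn V E w s) (hs : IsOpen s)
    (hw0 : ∀ x ∈ s, w x ≠ 0) {x : ℝ} (hx : x ∈ s) :
    HasDerivAt (deriv fun y => log (w y)) (2 * (V x - E) - deriv (fun y => log (w y)) x ^ 2) x := by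
  obtain ⟨w', hw⟩ := h
  have hlog : ∀ y ∈ s, deriv (fun y => log (w y)) y = w' y / w y :=
    fun y hy => ((hw y hy).1.log (hw0 y hy)).deriv
  rw [(eventuallyEq_of_mem (hs.mem_nhds hx) hlog).hasDerivAt_iff, hlog x hx]
  refine ((hw x hx).2.div (hw x hx).1 (hw0 x hx)).congr_deriv ?_
  field_simp [hw0 x hx]

lemma darboux (h : SolvesSchrodingerOn V E w s) {u : ℝ → ℝ} {ε : ℝ} (hs : IsOpen s)
    (hV : ∀ x ∈ s, DifferentiableAt ℝ V x) (hu : SolvesSchrodingerOn V ε u s)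
    (hu0 : ∀ x ∈ s, u x ≠ 0) :
    SolvesSchrodingerOn (fun x => V x - deriv (deriv fun y => log (u y)) x) E
      (fun x => (-deriv w x + deriv (fun y => log (u y)) x * w x) / √2) s := by
  set κ := deriv fun y => log (u y)
  have hκ : ∀ y ∈ s, HasDerivAt κ (2 * (V y - ε) - κ y ^ 2) y :=
    fun y hy => hu.hasDerivAt_deriv_log hs hu0 hy
  obtain ⟨w', hw⟩ := h
  refine ⟨fun y =>
    (-(2 * (V y - E) * w y) + (2 * (V y - ε) - κ y ^ 2) * w y + κ y * w' y) / √2,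
    fun y hy => ⟨?_, ?_⟩⟩
  · have hev : (fun x => (-deriv w x + κ x * w x) / √2) =ᶠ[𝓝 y]
        fun x => (-w' x + κ x * w x) / √2 :=
      eventuallyEq_of_mem (hs.mem_nhds hy) fun z hz => by rw [(hw z hz).1.deriv]
    rw [hev.hasDerivAt_iff]
    refine ((((hw y hy).2.neg).add ((hκ y hy).mul (hw y hy).1)).div_const √2).congr_deriv ?_
    ring
  · have hVd := (hV y hy).hasDerivAt
    have hd := (((((hVd.sub_const E).const_mul 2).mul (hw y hy).1).neg.add
      ((((hVd.sub_const ε).const_mul 2).sub ((hκ y hy).pow 2)).mul (hw y hy).1)).add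
      ((hκ y hy).mul (hw y hy).2)).div_const √2
    refine hd.congr_deriv ?_
    simp only [Pi.sub_apply, Pi.pow_apply]
    rw [(hκ y hy).deriv, (hw y hy).1.deriv]
    push_cast
    ring

end SolvesSchrodingerOn

lemma sin_pos_of_mem_Ioo_zero_pi_div_two {x : ℝ} (hx : x ∈ Ioo 0 (π / 2)) : 0 < sin x :=
  sin_pos_of_pos_of_lt_pi hx.1 (by linarith [hx.2, pi_pos])

lemma cos_pos_of_mem_Ioo_zero_pi_div_two {x : ℝ} (hx : x ∈ Ioo 0 (π / 2)) : 0 < cos x :=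
  cos_pos_of_mem_Ioo ⟨by linarith [hx.1, pi_pos], hx.2⟩

noncomputable def poschlTellerPotential (α β x : ℝ) : ℝ :=
  (α - 1) * α / (2 * sin x ^ 2) + (β - 1) * β / (2 * cos x ^ 2)

lemma differentiableAt_poschlTellerPotential (α β : ℝ) {x : ℝ} (hs : sin x ≠ 0)
    (hc : cos x ≠ 0) : DifferentiableAt ℝ (poschlTellerPotential α β) x := by
  unfold poschlTellerPotential
  fun_prop (disch := simp [hs, hc])

lemma hasDerivAt_sin_rpow_mul_cos_rpow (α β : ℝ) {x : ℝ} (hs : sin x ≠ 0)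
    (hc : cos x ≠ 0) :
    HasDerivAt (fun y => sin y ^ α * cos y ^ β)
      ((α * (cos x / sin x) - β * (sin x / cos x)) * (sin x ^ α * cos x ^ β)) x := by
  refine (((hasDerivAt_sin x).rpow_const (Or.inl hs)).mul
    ((hasDerivAt_cos x).rpow_const (Or.inl hc))).congr_deriv ?_
  rw [rpow_sub_one hs, rpow_sub_one hc]
  field_simp
  ring

lemma solvesSchrodingerOn_poschlTeller {α β a b : ℝ} {F F' F'' : ℝ → ℝ}
    (hab : a + b = α + β)
    (hF : ∀ t ∈ Ioo (0 : ℝ) 1, HasDerivAt F (F' t) t)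
    (hF' : ∀ t ∈ Ioo (0 : ℝ) 1, HasDerivAt F' (F'' t) t)
    (hode : ∀ t ∈ Ioo (0 : ℝ) 1,
      t * (1 - t) * F'' t + (α + 1 / 2 - (a + b + 1) * t) * F' t - a * b * F t = 0) :
    SolvesSchrodingerOn (poschlTellerPotential α β) ((a - b) ^ 2 / 2)
      (fun x => sin x ^ α * cos x ^ β * F (sin x ^ 2)) (Ioo 0 (π / 2)) := by
  set L : ℝ → ℝ := fun y => α * (cos y / sin y) - β * (sin y / cos y)
  refine ⟨fun y => sin y ^ α * cos y ^ β *
    (L y * F (sin y ^ 2) + 2 * sin y * cos y * F' (sin y ^ 2)), fun y hy => ?_⟩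
  have hS := sin_pos_of_mem_Ioo_zero_pi_div_two hy
  have hC := cos_pos_of_mem_Ioo_zero_pi_div_two hy
  have hpy := sin_sq_add_cos_sq y
  have ht : sin y ^ 2 ∈ Ioo (0 : ℝ) 1 := ⟨by positivity, by nlinarith⟩
  have hρ : HasDerivAt (fun y => sin y ^ α * cos y ^ β) (L y * (sin y ^ α * cos y ^ β)) y :=
    hasDerivAt_sin_rpow_mul_cos_rpow α β hS.ne' hC.ne'
  have hsq : HasDerivAt (fun y => sin y ^ 2) (2 * sin y * cos y) y := by
    refine ((hasDerivAt_sin y).fun_pow 2).congr_deriv ?_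
    push_cast
    ring
  have hL : HasDerivAt L (-(α / sin y ^ 2) - β / cos y ^ 2) y := by
    refine ((((hasDerivAt_cos y).div (hasDerivAt_sin y) hS.ne').const_mul α).sub
      (((hasDerivAt_sin y).div (hasDerivAt_cos y) hC.ne').const_mul β)).congr_deriv ?_
    field_simp
    linear_combination (-(α * cos y ^ 2) - β * sin y ^ 2) * hpy
  -- `L = ρ'/ρ` for `ρ = sin^α cos^β`; these two identities reduce `w'' = 2 (V₀ - E) w`
  -- to the hypergeometric equation at `t = sin² y`.
  have hLL : L y ^ 2 + (-(α / sin y ^ 2) - β / cos y ^ 2)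
      = 2 * poschlTellerPotential α β y - (α + β) ^ 2 := by
    simp only [L, poschlTellerPotential]
    field_simp
    linear_combination (α ^ 2 * cos y ^ 2 + β ^ 2 * sin y ^ 2) * hpy
  have hLSC : L y * (sin y * cos y) = α * cos y ^ 2 - β * sin y ^ 2 := by
    simp only [L]
    field_simp
  have hode' : 4 * sin y ^ 2 * cos y ^ 2 * F'' (sin y ^ 2)
      + (4 * α * cos y ^ 2 - 4 * β * sin y ^ 2 + 2 * cos y ^ 2 - 2 * sin y ^ 2) * F' (sin y ^ 2)
      = 4 * a * b * F (sin y ^ 2) := by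
    linear_combination 4 * hode _ ht + (4 * sin y ^ 2 * F'' (sin y ^ 2)
      + (4 * α + 2) * F' (sin y ^ 2)) * hpy + 4 * sin y ^ 2 * F' (sin y ^ 2) * hab
  have hFc := (hF _ ht).comp y hsq
  have hF'c := (hF' _ ht).comp y hsq
  have h2SC : HasDerivAt (fun y => 2 * sin y * cos y) (2 * (cos y ^ 2 - sin y ^ 2)) y := by
    refine (((hasDerivAt_sin y).const_mul 2).mul (hasDerivAt_cos y)).congr_deriv ?_
    ring
  refine ⟨(hρ.mul hFc).congr_deriv (by simp only [Function.comp_apply]; ring), ?_⟩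
  refine (hρ.mul ((hL.mul hFc).add (h2SC.mul hF'c))).congr_deriv ?_
  simp only [Function.comp_apply, Pi.mul_apply, Pi.add_apply]
  linear_combination (sin y ^ α * cos y ^ β) *
    (F (sin y ^ 2) * hLL + 4 * F' (sin y ^ 2) * hLSC + hode'
      + F (sin y ^ 2) * (a + b + α + β) * hab)

lemma solvesSchrodingerOn_poschlTeller_ordinaryHypergeometric {α β a b : ℝ}
    (hc : ∀ k : ℕ, (k : ℝ) ≠ -(α + 1 / 2)) (hab : a + b = α + β) :
    SolvesSchrodingerOn (poschlTellerPotential α β) ((a - b) ^ 2 / 2)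
      (fun x => sin x ^ α * cos x ^ β * ₂F₁ a b (α + 1 / 2) (sin x ^ 2)) (Ioo 0 (π / 2)) := by
  set q := ordinaryHypergeometricCoefficient a b (α + 1 / 2)
  have hR : ∀ t ∈ Ioo (0 : ℝ) 1, (‖t‖₊ : ℝ≥0∞) < (ofScalars ℝ q).radius := by
    intro t ht
    refine lt_of_lt_of_le ?_ (one_le_radius_ordinaryHypergeometricSeries hc)
    rw [ENNReal.coe_lt_one_iff, ← NNReal.coe_lt_one, coe_nnnorm, Real.norm_eq_abs,
      abs_of_pos ht.1]
    exact ht.2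
  exact solvesSchrodingerOn_poschlTeller (F := ofScalarsSum q) hab
    (fun t ht => hasDerivAt_ofScalarsSum (hR t ht))
    (fun t ht => hasDerivAt_ofScalarsSum ((hR t ht).trans_le (radius_le_radius_derivCoeff q)))
    (fun t ht => ofScalarsSum_hypergeometric_ode
      (ordinaryHypergeometricCoefficient_recurrence hc) (hR t ht))

lemma exists_PTeigenfun_eq_const_mul (α β : ℝ) (n : ℕ) :
    ∃ N : ℝ, PTeigenfun α β n = fun x =>
      N * (sin x ^ α * cos x ^ β * ₂F₁ (-(n : ℝ)) (n + (α + β)) (α + 1 / 2) (sin x ^ 2)) := by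
  refine ⟨√(2 * (2 * (n : ℝ) + (α + β)) * Gamma ((n : ℝ) + (α + β)) *
      poch (α + 1 / 2) n / ((Nat.factorial n : ℝ) * Gamma (α + 1 / 2) * Gamma (β + 1 / 2) *
        poch (β + 1 / 2) n)),
    funext fun x => ?_⟩
  rw [← hyp2F1_eq_ordinaryHypergeometric, hyp2F1_neg_nat, PTeigenfun]
  simp only [pow_mul, mul_assoc]

lemma deriv_deriv_log_mul_cos_rpow_div_sin_rpow {u v : ℝ → ℝ} {α β x : ℝ}
    (hx : x ∈ Ioo 0 (π / 2))
    (hv : ∀ y ∈ Ioo 0 (π / 2), v y = u y * cos y ^ (β - 1) / sin y ^ α)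
    (hu : ∀ y ∈ Ioo 0 (π / 2), 0 < u y)
    (hu' : ∀ y ∈ Ioo 0 (π / 2), DifferentiableAt ℝ u y)
    (hκ : DifferentiableAt ℝ (deriv fun y => log (u y)) x) :
    deriv (deriv fun y => log (v y)) x
      = deriv (deriv fun y => log (u y)) x + α / sin x ^ 2 - (β - 1) / cos x ^ 2 := by
  have hlog : ∀ y ∈ Ioo 0 (π / 2),
      log (v y) = log (u y) + (β - 1) * log (cos y) - α * log (sin y) := by
    intro y hy
    have := hu y hy
    have hS := sin_pos_of_mem_Ioo_zero_pi_div_two hy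
    have hC := cos_pos_of_mem_Ioo_zero_pi_div_two hy
    rw [hv y hy, log_div (by positivity) (by positivity), log_mul (by positivity) (by positivity),
      log_rpow hC, log_rpow hS]
  have hdlog : ∀ y ∈ Ioo 0 (π / 2), deriv (fun y => log (v y)) y
      = deriv (fun y => log (u y)) y + (β - 1) * (-sin y / cos y) - α * (cos y / sin y) := by
    intro y hy
    rw [(eventuallyEq_of_mem (isOpen_Ioo.mem_nhds hy) hlog).deriv_eq]
    exact ((((hu' y hy).log (hu y hy).ne').hasDerivAt.add
      (((hasDerivAt_cos y).log (cos_pos_of_mem_Ioo_zero_pi_div_two hy).ne').const_mul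
        (β - 1))).sub
      (((hasDerivAt_sin y).log (sin_pos_of_mem_Ioo_zero_pi_div_two hy).ne').const_mul α)).deriv
  have hS := sin_pos_of_mem_Ioo_zero_pi_div_two hx
  have hC := cos_pos_of_mem_Ioo_zero_pi_div_two hx
  rw [(eventuallyEq_of_mem (isOpen_Ioo.mem_nhds hx) hdlog).deriv_eq]
  refine ((hκ.hasDerivAt.add ((((hasDerivAt_sin x).neg).div (hasDerivAt_cos x)
    hC.ne').const_mul (β - 1))).sub (((hasDerivAt_cos x).div (hasDerivAt_sin x)
    hS.ne').const_mul α)).deriv.trans ?_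
  simp only [Pi.neg_apply]
  field_simp
  linear_combination ((1 - β) * sin x ^ 2 + α * cos x ^ 2) * sin_sq_add_cos_sq x

theorem statement13 (α β : ℝ) (hα : 1 < α) (γ : ℝ) (hγ : γ = α + β)
    (ε : ℝ)
    (uε vε : ℝ → ℝ)
    (huε : uε = fun x : ℝ => Real.sin x ^ α * Real.cos x ^ β *
      hyp2F1 (γ / 2 + Real.sqrt (ε / 2)) (γ / 2 - Real.sqrt (ε / 2)) (α + 1 / 2)
        (Real.sin x ^ 2))
    (hvε : vε = fun x : ℝ => Real.cos x ^ (2 * β - 1) *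
      hyp2F1 (γ / 2 + Real.sqrt (ε / 2)) (γ / 2 - Real.sqrt (ε / 2)) (α + 1 / 2)
        (Real.sin x ^ 2))
    (hupos : ∀ x ∈ Set.Ioo (0 : ℝ) (Real.pi / 2), 0 < uε x)
    (V₁ : ℝ → ℝ)
    (hV₁ : V₁ = fun x : ℝ => α * (α + 1) / (2 * Real.sin x ^ 2) +
      (β - 2) * (β - 1) / (2 * Real.cos x ^ 2) -
      deriv (deriv fun y : ℝ => Real.log (vε y)) x)
    (κ : ℝ → ℝ) (hκ : κ = fun x : ℝ => deriv (fun y : ℝ => Real.log (uε y)) x) :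
    ∀ n : ℕ, ∀ φ : ℝ → ℝ,
      φ = (fun x : ℝ =>
        (-(deriv (PTeigenfun α β n) x) + κ x * PTeigenfun α β n x) / Real.sqrt 2) →
      ∀ x ∈ Set.Ioo (0 : ℝ) (Real.pi / 2),
        -(1 / 2) * deriv (deriv φ) x + V₁ x * φ x
          = 1 / 2 * (2 * (n : ℝ) + γ) ^ 2 * φ x := by
  intro n φ hφ x hx
  replace hκ : κ = deriv fun y => log (uε y) := hκ
  have hc : ∀ k : ℕ, (k : ℝ) ≠ -(α + 1 / 2) := fun k hk => by
    linarith [k.cast_nonneg (α := ℝ)]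
  obtain ⟨E, hu⟩ : ∃ E, SolvesSchrodingerOn (poschlTellerPotential α β) E uε (Ioo 0 (π / 2)) := by
    rw [huε, hyp2F1_eq_ordinaryHypergeometric]
    exact ⟨_, solvesSchrodingerOn_poschlTeller_ordinaryHypergeometric hc (by rw [hγ]; ring)⟩
  have hu0 : ∀ y ∈ Ioo 0 (π / 2), uε y ≠ 0 := fun y hy => (hupos y hy).ne'
  have hψ : SolvesSchrodingerOn (poschlTellerPotential α β) (1 / 2 * (2 * n + γ) ^ 2)
      (PTeigenfun α β n) (Ioo 0 (π / 2)) := by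
    obtain ⟨N, hN⟩ := exists_PTeigenfun_eq_const_mul α β n
    have hE : 1 / 2 * (2 * n + γ) ^ 2 = (-(n : ℝ) - (n + (α + β))) ^ 2 / 2 := by
      rw [hγ]
      ring
    rw [hE, hN]
    exact (solvesSchrodingerOn_poschlTeller_ordinaryHypergeometric hc (by ring)).const_mul N
  have hvu : ∀ y ∈ Ioo 0 (π / 2), vε y = uε y * cos y ^ (β - 1) / sin y ^ α := by
    intro y hy
    have := (rpow_pos_of_pos (sin_pos_of_mem_Ioo_zero_pi_div_two hy) α).ne'
    have hpow : cos y ^ (2 * β - 1) = cos y ^ β * cos y ^ (β - 1) := by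
      rw [← rpow_add (cos_pos_of_mem_Ioo_zero_pi_div_two hy)]
      ring_nf
    simp only [hvε, huε, hpow]
    field_simp
  have hV₁x : V₁ x = poschlTellerPotential α β x - deriv κ x := by
    simp only [hV₁, hκ]
    rw [deriv_deriv_log_mul_cos_rpow_div_sin_rpow hx hvu hupos (fun y hy => hu.differentiableAt hy)
      (hu.hasDerivAt_deriv_log isOpen_Ioo hu0 hx).differentiableAt, poschlTellerPotential]
    field_simp
    ring
  have hV : ∀ y ∈ Ioo 0 (π / 2), DifferentiableAt ℝ (poschlTellerPotential α β) y :=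
    fun y hy => differentiableAt_poschlTellerPotential α β
      (sin_pos_of_mem_Ioo_zero_pi_div_two hy).ne' (cos_pos_of_mem_Ioo_zero_pi_div_two hy).ne'
  rw [hV₁x, hφ, hκ]
  exact (hψ.darboux isOpen_Ioo hV hu hu0).schrodinger isOpen_Ioo hx
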